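/- The function g(k) = 6E(k) + (8k²−7)K(k) has exactly one zero in the open interval (0,1): g(0⁺) limit equals −π/2 < 0, g(k) → +∞ as k → 1⁻, and g is continuous and strictly increasing on (0,1). -/

import Mathlib

open Real

/-- The complete elliptic integral of the first kind. -/
noncomputable def ellipticK (k : ℝ) : ℝ :=
  ∫ θ in (0:ℝ)..(π / 2), 1 / Real.sqrt (1 - k ^ 2 * Real.sin θ ^ 2)

/-- The complete elliptic integral of the second kind. -/
noncomputable def ellipticE (k : ℝ) : ℝ :=
  ∫ θ in (0:ℝ)..(π / 2), Real.sqrt (1 - k ^ 2 * Real.sin θ ^ 2)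

/-! With `v = √(1 - k² sin² θ)` one has `g(k) = ∫₀^{π/2} (6v + (8k² - 7)/v) dθ`, and for each
fixed `θ` the integrand is strictly increasing in `k²` on `[0, 1)`: after clearing denominators, the
difference of two values times `v₁ + v₂` is `(k₂² - k₁²)` times a manifestly positive factor.
Hence `g` is strictly increasing on `[0, 1)`. The bounds `0 ≤ E ≤ π/2 ≤ K` give `g(k) < 0` for
`k² < 1/8` and `g(k) > 0` for `k² > 7/8`, and `g` is continuous as a parametric integral with
jointly continuous integrand, so the intermediate value theorem supplies the zero. -/

open Set intervalIntegral

noncomputable def ellipticG (k : ℝ) : ℝ :=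
  6 * ellipticE k + (8 * k ^ 2 - 7) * ellipticK k

noncomputable def ellipticGIntegrand (t s : ℝ) : ℝ :=
  6 * √(1 - t * s) + (8 * t - 7) / √(1 - t * s)

lemma one_sub_mul_sin_sq_pos {t : ℝ} (ht : t < 1) (θ : ℝ) : 0 < 1 - t * sin θ ^ 2 := by
  have hs := sin_sq_le_one θ
  rcases le_total t 0 with h | h <;> nlinarith [sq_nonneg (sin θ)]

lemma continuous_ellipticGIntegrand_sin_sq {X : Type*} [TopologicalSpace X] {t : X → ℝ}
    (ht : Continuous t) (ht1 : ∀ x, t x < 1) {θ : X → ℝ} (hθ : Continuous θ) :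
    Continuous fun x ↦ ellipticGIntegrand (t x) (sin (θ x) ^ 2) := by
  unfold ellipticGIntegrand
  refine Continuous.add (by fun_prop) (Continuous.div (by fun_prop) (by fun_prop) fun x ↦ ?_)
  exact (sqrt_pos.2 (one_sub_mul_sin_sq_pos (ht1 x) (θ x))).ne'

lemma ellipticG_eq_integral {k : ℝ} (hk : k ^ 2 < 1) :
    ellipticG k = ∫ θ in (0:ℝ)..(π / 2), ellipticGIntegrand (k ^ 2) (sin θ ^ 2) := by
  have hK : Continuous fun θ ↦ 1 / √(1 - k ^ 2 * sin θ ^ 2) :=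
    continuous_const.div (by fun_prop) fun θ ↦ (sqrt_pos.2 (one_sub_mul_sin_sq_pos hk θ)).ne'
  rw [ellipticG, ellipticE, ellipticK, ← integral_const_mul, ← integral_const_mul,
    ← integral_add (by apply Continuous.intervalIntegrable; fun_prop)
      (by apply Continuous.intervalIntegrable; fun_prop)]
  simp only [ellipticGIntegrand, mul_one_div]

lemma strictMonoOn_ellipticGIntegrand {s : ℝ} (hs : s ≤ 1) :
    StrictMonoOn (fun t ↦ ellipticGIntegrand t s) {t | t * s < 1} := by
  intro t₁ ht₁ t₂ ht₂ ht
  simp only [mem_ofPred_eq] at ht₁ ht₂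
  simp only [ellipticGIntegrand]
  set v₁ := √(1 - t₁ * s)
  set v₂ := √(1 - t₂ * s)
  have hv₁ : 0 < v₁ := sqrt_pos.2 (by linarith)
  have hv₂ : 0 < v₂ := sqrt_pos.2 (by linarith)
  have e₁ : v₁ ^ 2 = 1 - t₁ * s := sq_sqrt (by linarith)
  have e₂ : v₂ ^ 2 = 1 - t₂ * s := sq_sqrt (by linarith)
  -- Multiplying by `v₁ + v₂` turns `v₂ - v₁` into `v₂² - v₁² = (t₁ - t₂) s`, so `N` factors.
  set N := 6 * (v₂ - v₁) * v₁ * v₂ + (8 * t₂ - 7) * v₁ - (8 * t₁ - 7) * v₂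
  have hN_mul : N * (v₁ + v₂) = (t₂ - t₁) * (8 - 7 * s + v₁ * v₂ * (8 - 6 * s)) := by
    linear_combination (8 * t₂ - 7 - 6 * v₁ * v₂) * e₁ + (6 * v₁ * v₂ - (8 * t₁ - 7)) * e₂
  have hN : 0 < N := by
    refine pos_of_mul_pos_left ?_ (add_pos hv₁ hv₂).le
    rw [hN_mul]
    exact mul_pos (by linarith) (by nlinarith [mul_pos hv₁ hv₂])
  have hdiff : 6 * v₂ + (8 * t₂ - 7) / v₂ - (6 * v₁ + (8 * t₁ - 7) / v₁) = N / (v₁ * v₂) := by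
    field_simp
    ring
  rw [← sub_pos, hdiff]
  positivity

lemma strictMonoOn_ellipticG : StrictMonoOn ellipticG (Ico 0 1) := by
  intro k₁ hk₁ k₂ hk₂ hk
  have hsq₁ : k₁ ^ 2 < 1 := by nlinarith [hk₁.1, hk₁.2]
  have hsq₂ : k₂ ^ 2 < 1 := by nlinarith [hk₂.1, hk₂.2]
  have hsq : k₁ ^ 2 < k₂ ^ 2 := pow_lt_pow_left₀ hk hk₁.1 two_ne_zero
  have hint : ∀ {t : ℝ}, t < 1 →
      IntervalIntegrable (fun θ ↦ ellipticGIntegrand t (sin θ ^ 2)) MeasureTheory.volume 0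
        (π / 2) :=
    fun ht ↦ (continuous_ellipticGIntegrand_sin_sq continuous_const (fun _ ↦ ht)
      continuous_id).intervalIntegrable _ _
  rw [ellipticG_eq_integral hsq₁, ellipticG_eq_integral hsq₂, ← sub_pos,
    ← integral_sub (hint hsq₂) (hint hsq₁)]
  refine intervalIntegral_pos_of_pos_on ((hint hsq₂).sub (hint hsq₁)) (fun θ _ ↦ ?_) (by positivity)
  have hmem : ∀ {t : ℝ}, t < 1 → t ∈ {t | t * sin θ ^ 2 < 1} :=
    fun ht ↦ by simpa using one_sub_mul_sin_sq_pos ht θ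
  exact sub_pos.2 (strictMonoOn_ellipticGIntegrand (sin_sq_le_one θ) (hmem hsq₁) (hmem hsq₂) hsq)

lemma continuousOn_ellipticG : ContinuousOn ellipticG (Ioo (-1) 1) := by
  have hsq : ∀ k : Ioo (-1 : ℝ) 1, (k : ℝ) ^ 2 < 1 := fun k ↦ by nlinarith [k.2.1, k.2.2]
  rw [continuousOn_iff_continuous_domRestrict]
  have hcont : Continuous fun k : Ioo (-1 : ℝ) 1 ↦
      ∫ θ in (0:ℝ)..(π / 2), ellipticGIntegrand ((k : ℝ) ^ 2) (sin θ ^ 2) :=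
    continuous_parametric_intervalIntegral_of_continuous'
      (continuous_ellipticGIntegrand_sin_sq (by fun_prop) (fun p ↦ hsq p.1) continuous_snd) _ _
  convert hcont using 1
  funext k
  exact ellipticG_eq_integral (hsq k)

lemma ellipticE_nonneg (k : ℝ) : 0 ≤ ellipticE k :=
  integral_nonneg (by positivity) fun _ _ ↦ sqrt_nonneg _

lemma ellipticE_le_pi_div_two (k : ℝ) : ellipticE k ≤ π / 2 := by
  have h : ellipticE k ≤ ∫ _ in (0:ℝ)..(π / 2), (1 : ℝ) := by
    refine integral_mono_on (by positivity) (by apply Continuous.intervalIntegrable; fun_prop)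
      intervalIntegrable_const fun θ _ ↦ ?_
    exact sqrt_le_one.2 (by nlinarith [sq_nonneg (k * sin θ)])
  simpa using h

lemma pi_div_two_le_ellipticK {k : ℝ} (hk : k ^ 2 < 1) : π / 2 ≤ ellipticK k := by
  have hpos := fun θ ↦ sqrt_pos.2 (one_sub_mul_sin_sq_pos hk θ)
  have h : ∫ _ in (0:ℝ)..(π / 2), (1 : ℝ) ≤ ellipticK k := by
    refine integral_mono_on (by positivity) intervalIntegrable_const
      ((continuous_const.div (by fun_prop) fun θ ↦ (hpos θ).ne').intervalIntegrable _ _)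
      fun θ _ ↦ ?_
    rw [le_div_iff₀ (hpos θ), one_mul]
    exact sqrt_le_one.2 (by nlinarith [sq_nonneg (k * sin θ)])
  simpa using h

lemma ellipticG_neg {k : ℝ} (hk : k ^ 2 < 1 / 8) : ellipticG k < 0 := by
  have hE := ellipticE_le_pi_div_two k
  have hK := pi_div_two_le_ellipticK (hk.trans (by norm_num))
  rw [ellipticG]
  nlinarith [pi_pos]

lemma ellipticG_pos {k : ℝ} (hk : 7 / 8 < k ^ 2) (hk1 : k ^ 2 < 1) : 0 < ellipticG k := by
  have hE := ellipticE_nonneg k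
  have hK := pi_div_two_le_ellipticK hk1
  rw [ellipticG]
  nlinarith [pi_pos]

/-- `g(k) = 6E(k) + (8k² − 7)K(k)` has exactly one zero in `(0,1)`. -/
theorem g_unique_zero :
    ∃! k : ℝ, k ∈ Set.Ioo (0:ℝ) 1 ∧
      6 * ellipticE k + (8 * k ^ 2 - 7) * ellipticK k = 0 := by
  change ∃! k : ℝ, k ∈ Ioo 0 1 ∧ ellipticG k = 0
  have hcont : ContinuousOn ellipticG (Icc (1 / 4) (19 / 20)) :=
    continuousOn_ellipticG.mono (Icc_subset_Ioo (by norm_num) (by norm_num))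
  obtain ⟨k, hk, hzero⟩ := intermediate_value_Ioo (by norm_num) hcont
    ⟨ellipticG_neg (by norm_num), ellipticG_pos (by norm_num) (by norm_num)⟩
  have hk01 : k ∈ Ioo 0 1 := Ioo_subset_Ioo (by norm_num) (by norm_num) hk
  refine ⟨k, ⟨hk01, hzero⟩, fun y ⟨hy, hy0⟩ ↦ ?_⟩
  exact strictMonoOn_ellipticG.injOn (Ioo_subset_Ico_self hy) (Ioo_subset_Ico_self hk01)
    (hy0.trans hzero.symm)
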